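/- For the minimal quadratic interpolation projector on [−1,1] (with θ(Π_2;[−1,1]) = 5/4) and the minimal absorption coefficient ξ_2(T([−1,1])) = 11/8 where T(x) = (x,x²), the right-hand inequality ξ_2(T(Ω)) ≤ (d/2)(θ(Π;Ω) − 1) + 1 with d = 3 holds with equality: 11/8 = (3/2)(5/4 − 1) + 1. -/

import Mathlib

/-- The (solid) simplex with vertices `v`. -/
noncomputable def simplexHull {n : ℕ} (v : Fin (n+1) → (Fin n → ℝ)) : Set (Fin n → ℝ) :=
  convexHull ℝ (Set.range v)

/-- The homothetic copy `σS` of the simplex with vertices `v`, with ratio `σ`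
about the centroid. -/
noncomputable def scaledSimplex {n : ℕ} (v : Fin (n+1) → (Fin n → ℝ)) (σ : ℝ) :
    Set (Fin n → ℝ) :=
  AffineMap.homothety (Finset.univ.centroid ℝ v) σ '' simplexHull v

/-- The absorption coefficient `ξ(Ω; S)` of `Ω` by the simplex with vertices `v`. -/
noncomputable def absCoef {n : ℕ} (Ω : Set (Fin n → ℝ)) (v : Fin (n+1) → (Fin n → ℝ)) : ℝ :=
  sInf {σ : ℝ | 1 ≤ σ ∧ Ω ⊆ scaledSimplex v σ}


/-- The Lagrange basis polynomial for node `j` of the node family `c`. -/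
noncomputable def lag {k : ℕ} (c : Fin k → ℝ) (j : Fin k) (x : ℝ) : ℝ :=
  ∏ i ∈ Finset.univ.erase j, (x - c i) / (c j - c i)

/-- The norm of the interpolation projector with nodes `c`, i.e. the maximum over
`[-1,1]` of the Lebesgue function `x ↦ ∑ⱼ |λⱼ(x)|`. -/
noncomputable def projNorm {k : ℕ} (c : Fin k → ℝ) : ℝ :=
  sSup {s : ℝ | ∃ x ∈ Set.Icc (-1:ℝ) 1, s = ∑ j, |lag c j x|}

/-!
The barycentric coordinates of `(x, x²)` with respect to the triangle with vertices `(cⱼ, cⱼ²)`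
are the Lagrange basis values `λⱼ(x)`, and a point lies in the homothetic copy `σS` exactly when
all its barycentric coordinates are at least `(1 - σ)/3`. Since `∑ λⱼ = 1`, also
`∑ |λᵢ(x)| ≥ 1 - 2 λⱼ(x)`. So both constants are bounded below by the most negative value of a
basis polynomial on `[-1, 1]`: for sorted nodes, at the midpoint of the longer of the two gaps
the basis polynomial of the third node is at most `-1/8`, which gives `θ ≥ 1 + 2/8` and
`ξ ≥ 1 + 3/8`. The nodes `-1, 0, 1` attain both bounds.
-/

open Set Finset Function

lemma lag_eq_eval_basis {k : ℕ} (c : Fin k → ℝ) (j : Fin k) (x : ℝ) :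
    lag c j x = (Lagrange.basis univ c j).eval x := by
  simp [lag, Lagrange.basis, Lagrange.basisDivisor, Polynomial.eval_prod, div_eq_inv_mul]

lemma sum_lag_mul_pow {k : ℕ} {c : Fin k → ℝ} (hc : Injective c) (x : ℝ) {m : ℕ}
    (hm : m < k) : ∑ j, lag c j x * c j ^ m = x ^ m := by
  have h := congrArg (Polynomial.eval x) <| Lagrange.eq_interpolate (s := univ)
    (f := Polynomial.X ^ m) hc.injOn (by simpa [Polynomial.degree_X_pow] using hm)
  simp only [Lagrange.interpolate_apply, Polynomial.eval_finsetSum, Polynomial.eval_mul,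
    Polynomial.eval_C, Polynomial.eval_pow, Polynomial.eval_X] at h
  simp only [lag_eq_eval_basis, mul_comm _ (c _ ^ m), h]

lemma sum_lag_eq_one {k : ℕ} {c : Fin k → ℝ} (hc : Injective c) (hk : 0 < k) (x : ℝ) :
    ∑ j, lag c j x = 1 := by
  simpa using sum_lag_mul_pow hc x hk

lemma lag_comp_perm {k : ℕ} (c : Fin k → ℝ) (π : Equiv.Perm (Fin k)) (j : Fin k) (x : ℝ) :
    lag (c ∘ π) j x = lag c (π j) x :=
  Finset.prod_equiv π (by simp) (by simp)

lemma continuous_lag {k : ℕ} (c : Fin k → ℝ) (j : Fin k) : Continuous (lag c j) := by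
  unfold lag; fun_prop

lemma lag_fin_three_zero (c : Fin 3 → ℝ) (x : ℝ) :
    lag c 0 x = (x - c 1) / (c 0 - c 1) * ((x - c 2) / (c 0 - c 2)) := by
  rw [lag, show univ.erase (0 : Fin 3) = {1, 2} by decide, prod_pair (by decide)]

lemma lag_fin_three_one (c : Fin 3 → ℝ) (x : ℝ) :
    lag c 1 x = (x - c 0) / (c 1 - c 0) * ((x - c 2) / (c 1 - c 2)) := by
  rw [lag, show univ.erase (1 : Fin 3) = {0, 2} by decide, prod_pair (by decide)]

lemma lag_fin_three_two (c : Fin 3 → ℝ) (x : ℝ) :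
    lag c 2 x = (x - c 0) / (c 2 - c 0) * ((x - c 1) / (c 2 - c 1)) := by
  rw [lag, show univ.erase (2 : Fin 3) = {0, 1} by decide, prod_pair (by decide)]

lemma lag_neg_one_zero_one :
    lag ![(-1 : ℝ), 0, 1] =
      ![fun x => x * (x - 1) / 2, fun x => 1 - x ^ 2, fun x => x * (x + 1) / 2] := by
  funext j x
  fin_cases j
  · simp [lag_fin_three_zero]; ring
  · simp [lag_fin_three_one]; ring
  · simp [lag_fin_three_two]; ring

lemma one_sub_two_mul_le_sum_abs {ι : Type*} [Fintype ι] {w : ι → ℝ} (hw : ∑ i, w i = 1)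
    (j : ι) : 1 - 2 * w j ≤ ∑ i, |w i| := by
  have := single_le_sum (f := fun i => |w i| - w i) (fun i _ => sub_nonneg.2 (le_abs_self _))
    (mem_univ j)
  rw [sum_sub_distrib, hw] at this
  linarith [neg_abs_le (w j)]

lemma sum_abs_lag_le_projNorm {k : ℕ} (c : Fin k → ℝ) {x : ℝ} (hx : x ∈ Icc (-1 : ℝ) 1) :
    ∑ j, |lag c j x| ≤ projNorm c := by
  have hbdd : BddAbove ((fun x => ∑ j, |lag c j x|) '' Icc (-1 : ℝ) 1) :=
    isCompact_Icc.bddAbove_image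
      (continuous_finsetSum _ fun j _ => (continuous_lag c j).abs).continuousOn
  refine le_csSup (hbdd.mono ?_) ⟨x, hx, rfl⟩
  rintro _ ⟨y, hy, rfl⟩
  exact ⟨y, hy, rfl⟩

lemma abs_lag_le_projNorm {k : ℕ} (c : Fin k → ℝ) {x : ℝ} (hx : x ∈ Icc (-1 : ℝ) 1)
    (j : Fin k) : |lag c j x| ≤ projNorm c :=
  (single_le_sum (fun i _ => abs_nonneg (lag c i x)) (mem_univ j)).trans
    (sum_abs_lag_le_projNorm c hx)

lemma exists_lag_le_neg_one_eighth_of_lt {c : Fin 3 → ℝ} (h₀₁ : c 0 < c 1) (h₁₂ : c 1 < c 2) :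
    ∃ x ∈ Icc (c 0) (c 2), ∃ j, lag c j x ≤ -1 / 8 := by
  rcases le_total (c 2 - c 1) (c 1 - c 0) with h | h
  · refine ⟨(c 0 + c 1) / 2, ⟨by linarith, by linarith⟩, 2, ?_⟩
    have : lag c 2 ((c 0 + c 1) / 2) =
        -(c 1 - c 0) ^ 2 / (4 * ((c 2 - c 0) * (c 2 - c 1))) := by
      rw [lag_fin_three_two, div_mul_div_comm, div_eq_div_iff (by nlinarith) (by nlinarith)]
      ring
    rw [this, div_le_iff₀ (by nlinarith)]
    nlinarith
  · refine ⟨(c 1 + c 2) / 2, ⟨by linarith, by linarith⟩, 0, ?_⟩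
    have : lag c 0 ((c 1 + c 2) / 2) =
        -(c 2 - c 1) ^ 2 / (4 * ((c 1 - c 0) * (c 2 - c 0))) := by
      rw [lag_fin_three_zero, div_mul_div_comm, div_eq_div_iff (by nlinarith) (by nlinarith)]
      ring
    rw [this, div_le_iff₀ (by nlinarith)]
    nlinarith

lemma exists_lag_le_neg_one_eighth {c : Fin 3 → ℝ} (hc : Injective c) {l u : ℝ}
    (hI : ∀ j, c j ∈ Icc l u) : ∃ x ∈ Icc l u, ∃ j, lag c j x ≤ -1 / 8 := by
  have hmono : StrictMono (c ∘ Tuple.sort c) :=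
    (Tuple.monotone_sort c).strictMono_of_injective (hc.comp (Tuple.sort c).injective)
  obtain ⟨x, hx, j, hj⟩ :=
    exists_lag_le_neg_one_eighth_of_lt (hmono (by decide : (0 : Fin 3) < 1)) (hmono (by decide))
  exact ⟨x, ⟨(hI _).1.trans hx.1, hx.2.trans (hI _).2⟩, Tuple.sort c j,
    by rwa [lag_comp_perm] at hj⟩

lemma injective_neg_one_zero_one : Injective ![(-1 : ℝ), 0, 1] := by
  refine StrictMono.injective (Fin.strictMono_iff_lt_succ.2 fun i => ?_)
  fin_cases i <;> simp

lemma neg_one_zero_one_mem_Icc : ∀ j, ![(-1 : ℝ), 0, 1] j ∈ Icc (-1 : ℝ) 1 := by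
  intro j; fin_cases j <;> norm_num

lemma five_fourths_le_projNorm {c : Fin 3 → ℝ} (hc : Injective c)
    (hI : ∀ j, c j ∈ Icc (-1 : ℝ) 1) : 5 / 4 ≤ projNorm c := by
  obtain ⟨x, hx, j, hj⟩ := exists_lag_le_neg_one_eighth hc hI
  calc 5 / 4 ≤ 1 - 2 * lag c j x := by linarith
    _ ≤ ∑ i, |lag c i x| := one_sub_two_mul_le_sum_abs (sum_lag_eq_one hc (by norm_num) x) j
    _ ≤ projNorm c := sum_abs_lag_le_projNorm c hx

lemma projNorm_neg_one_zero_one : projNorm ![(-1 : ℝ), 0, 1] = 5 / 4 := by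
  refine le_antisymm (csSup_le ⟨_, 0, by norm_num, rfl⟩ ?_)
    (five_fourths_le_projNorm injective_neg_one_zero_one neg_one_zero_one_mem_Icc)
  rintro _ ⟨x, ⟨hx₁, hx₂⟩, rfl⟩
  simp only [lag_neg_one_zero_one, Fin.sum_univ_three, Matrix.cons_val_zero, Matrix.cons_val_one,
    Matrix.cons_val_two, Matrix.head_cons, Matrix.tail_cons]
  rw [abs_of_nonneg (by nlinarith : (0 : ℝ) ≤ 1 - x ^ 2)]
  rcases le_total 0 x with h | h
  · rw [abs_of_nonpos (by nlinarith), abs_of_nonneg (by nlinarith)]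
    nlinarith [sq_nonneg (x - 1 / 2)]
  · rw [abs_of_nonneg (by nlinarith), abs_of_nonpos (by nlinarith)]
    nlinarith [sq_nonneg (x + 1 / 2)]

lemma isLeast_projNorm_three_nodes :
    IsLeast {p : ℝ | ∃ a b c : ℝ, a ∈ Icc (-1:ℝ) 1 ∧ b ∈ Icc (-1:ℝ) 1 ∧
        c ∈ Icc (-1:ℝ) 1 ∧ a < b ∧ b < c ∧ p = projNorm ![a, b, c]} (5 / 4) := by
  refine ⟨⟨-1, 0, 1, by norm_num, by norm_num, by norm_num, by norm_num, by norm_num,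
    projNorm_neg_one_zero_one.symm⟩, ?_⟩
  rintro _ ⟨a, b, c, ha, hb, hc, hab, hbc, rfl⟩
  refine five_fourths_le_projNorm
    (StrictMono.injective (Fin.strictMono_iff_lt_succ.2 fun i => ?_)) fun j => ?_
  · fin_cases i <;> assumption
  · fin_cases j <;> assumption

lemma mem_convexHull_range_iff {R E ι : Type*} [Field R] [LinearOrder R] [IsStrictOrderedRing R]
    [AddCommGroup E] [Module R E] [Fintype ι] {v : ι → E} {y : E} :
    y ∈ convexHull R (range v) ↔
      ∃ w : ι → R, (∀ i, 0 ≤ w i) ∧ ∑ i, w i = 1 ∧ ∑ i, w i • v i = y := by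
  refine ⟨fun hy => ?_, fun ⟨w, hw₀, hw₁, hy⟩ =>
    mem_convexHull_of_exists_fintype w v hw₀ hw₁ mem_range_self hy⟩
  rw [convexHull_range_eq_exists_affineCombination] at hy
  obtain ⟨s, w, hw₀, hw₁, rfl⟩ := hy
  have hsum : ∑ i, (s : Set ι).indicator w i = 1 := by
    rw [Finset.sum_indicator_subset _ (subset_univ s), hw₁]
  refine ⟨(s : Set ι).indicator w, fun i => Set.indicator_nonneg hw₀ i, hsum, ?_⟩
  rw [affineCombination_indicator_subset w v (subset_univ s),
    Finset.affineCombination_eq_linear_combination _ _ _ hsum]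

lemma homothety_centroid_sum_smul {n : ℕ} (v : Fin (n+1) → (Fin n → ℝ)) (σ : ℝ)
    (μ : Fin (n+1) → ℝ) :
    AffineMap.homothety (univ.centroid ℝ v) σ (∑ j, μ j • v j) =
      ∑ j, (σ * μ j + (1 - σ) / (n + 1)) • v j := by
  rw [Finset.centroid_def, Finset.affineCombination_eq_linear_combination _ _ _
    (sum_centroidWeights_eq_one_of_nonempty ℝ _ univ_nonempty)]
  simp only [AffineMap.homothety_apply, vsub_eq_sub, vadd_eq_add, centroidWeights_apply,
    card_univ, Fintype.card_fin, Nat.cast_add, Nat.cast_one, add_smul, mul_smul, sum_add_distrib,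
    ← smul_sum, div_eq_mul_inv]
  module

lemma mem_scaledSimplex_iff {n : ℕ} (v : Fin (n+1) → (Fin n → ℝ)) {σ : ℝ} (hσ : 0 < σ)
    (y : Fin n → ℝ) :
    y ∈ scaledSimplex v σ ↔
      ∃ w : Fin (n+1) → ℝ, (∀ j, (1 - σ) / (n + 1) ≤ w j) ∧ ∑ j, w j = 1 ∧
        ∑ j, w j • v j = y := by
  simp only [scaledSimplex, simplexHull, mem_image, mem_convexHull_range_iff]
  constructor
  · rintro ⟨_, ⟨μ, hμ₀, hμ₁, rfl⟩, rfl⟩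
    refine ⟨_, fun j => ?_, ?_, (homothety_centroid_sum_smul v σ μ).symm⟩
    · simpa using mul_nonneg hσ.le (hμ₀ j)
    · simp only [sum_add_distrib, ← mul_sum, hμ₁, sum_const, card_univ, Fintype.card_fin,
        nsmul_eq_mul, Nat.cast_add, Nat.cast_one]
      field_simp
      ring
  · rintro ⟨w, hw, hw₁, rfl⟩
    have hμ₁ : ∑ j, (w j - (1 - σ) / (n + 1)) / σ = 1 := by
      simp only [← sum_div, sum_sub_distrib, hw₁, sum_const, card_univ, Fintype.card_fin,
        nsmul_eq_mul, Nat.cast_add, Nat.cast_one]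
      field_simp
      ring
    refine ⟨_, ⟨_, fun j => div_nonneg (sub_nonneg.2 (hw j)) hσ.le, hμ₁, rfl⟩, ?_⟩
    rw [homothety_centroid_sum_smul]
    congr! 2 with j
    field_simp
    ring

def parabola (x : ℝ) : Fin 2 → ℝ := ![x, x ^ 2]

lemma sum_lag_smul_parabola {c : Fin 3 → ℝ} (hc : Injective c) (x : ℝ) :
    ∑ j, lag c j x • parabola (c j) = parabola x := by
  funext i
  fin_cases i
  · simpa [parabola] using sum_lag_mul_pow hc x (m := 1) (by norm_num)
  · simpa [parabola] using sum_lag_mul_pow hc x (m := 2) (by norm_num)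

lemma affineIndependent_parabola_comp {c : Fin 3 → ℝ} (hc : Injective c) :
    AffineIndependent ℝ (parabola ∘ c) := by
  rw [affineIndependent_iff_of_fintype]
  intro w hw₀ hw i
  rw [weightedVSub_eq_linear_combination _ hw₀] at hw
  have h₁ := congrFun hw 0
  have h₂ := congrFun hw 1
  simp only [parabola, comp_apply, Finset.sum_apply, Pi.smul_apply, smul_eq_mul,
    Matrix.cons_val_zero, Matrix.cons_val_one, Pi.zero_apply, Fin.sum_univ_three] at h₁ h₂ hw₀
  have hne : ∀ {i j : Fin 3}, i ≠ j → c i - c j ≠ 0 := fun h => sub_ne_zero.2 (hc.ne h)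
  fin_cases i
  · have : w 0 * ((c 0 - c 1) * (c 0 - c 2)) = 0 := by
      linear_combination h₂ - (c 1 + c 2) * h₁ + c 1 * c 2 * hw₀
    simpa [hne] using this
  · have : w 1 * ((c 1 - c 0) * (c 1 - c 2)) = 0 := by
      linear_combination h₂ - (c 0 + c 2) * h₁ + c 0 * c 2 * hw₀
    simpa [hne] using this
  · have : w 2 * ((c 2 - c 0) * (c 2 - c 1)) = 0 := by
      linear_combination h₂ - (c 0 + c 1) * h₁ + c 0 * c 1 * hw₀
    simpa [hne] using this

lemma sum_smul_parabola_eq_iff {c : Fin 3 → ℝ} (hc : Injective c) (x : ℝ) (w : Fin 3 → ℝ) :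
    (∑ j, w j = 1 ∧ ∑ j, w j • parabola (c j) = parabola x) ↔ w = fun j => lag c j x := by
  have hlag₁ : ∑ j, lag c j x = 1 := sum_lag_eq_one hc (by norm_num) x
  refine ⟨fun ⟨hw₁, hw⟩ => ?_, fun h => h ▸ ⟨hlag₁, sum_lag_smul_parabola hc x⟩⟩
  refine (affineIndependent_iff_eq_of_fintype_affineCombination_eq ℝ _).1
    (affineIndependent_parabola_comp hc) _ _ hw₁ hlag₁ ?_
  rw [affineCombination_eq_linear_combination _ _ _ hw₁,
    affineCombination_eq_linear_combination _ _ _ hlag₁]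
  exact hw.trans (sum_lag_smul_parabola hc x).symm

lemma parabola_mem_scaledSimplex_iff {c : Fin 3 → ℝ} (hc : Injective c) {σ : ℝ} (hσ : 0 < σ)
    (x : ℝ) : parabola x ∈ scaledSimplex (parabola ∘ c) σ ↔ ∀ j, (1 - σ) / 3 ≤ lag c j x := by
  rw [mem_scaledSimplex_iff _ hσ]
  constructor
  · rintro ⟨w, hw, hw'⟩
    rw [(sum_smul_parabola_eq_iff hc x w).1 hw'] at hw
    norm_num at hw
    exact hw
  · intro h
    refine ⟨_, fun j => ?_, (sum_smul_parabola_eq_iff hc x _).2 rfl⟩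
    norm_num [h j]

lemma parabola_image_subset_scaledSimplex_iff {c : Fin 3 → ℝ} (hc : Injective c) {σ : ℝ}
    (hσ : 0 < σ) (s : Set ℝ) :
    parabola '' s ⊆ scaledSimplex (parabola ∘ c) σ ↔ ∀ x ∈ s, ∀ j, (1 - σ) / 3 ≤ lag c j x := by
  simp only [image_subset_iff, Set.subset_def, Set.mem_preimage,
    parabola_mem_scaledSimplex_iff hc hσ]

lemma eleven_eighths_le_absCoef {c : Fin 3 → ℝ} (hc : Injective c)
    (hI : ∀ j, c j ∈ Icc (-1 : ℝ) 1) :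
    11 / 8 ≤ absCoef (parabola '' Icc (-1) 1) (parabola ∘ c) := by
  have hP : 0 ≤ projNorm c :=
    (abs_nonneg _).trans (abs_lag_le_projNorm c (x := 0) (by norm_num) 0)
  -- `sInf ∅ = 0`, so a witness is needed: `lag c j ≥ -projNorm c` on `[-1, 1]`.
  refine le_csInf ⟨1 + 3 * projNorm c, by linarith, ?_⟩ ?_
  · refine (parabola_image_subset_scaledSimplex_iff hc (by linarith) _).2 fun x hx j => ?_
    linarith [neg_abs_le (lag c j x), abs_lag_le_projNorm c hx j]
  · rintro σ ⟨hσ, hsub⟩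
    obtain ⟨x, hx, j, hj⟩ := exists_lag_le_neg_one_eighth hc hI
    have := (parabola_image_subset_scaledSimplex_iff hc (by linarith) _).1 hsub x hx j
    linarith

lemma absCoef_neg_one_zero_one :
    absCoef (parabola '' Icc (-1) 1) (parabola ∘ ![(-1 : ℝ), 0, 1]) = 11 / 8 := by
  refine le_antisymm (csInf_le ⟨1, fun _ h => h.1⟩ ⟨by norm_num, ?_⟩)
    (eleven_eighths_le_absCoef injective_neg_one_zero_one neg_one_zero_one_mem_Icc)
  refine (parabola_image_subset_scaledSimplex_iff injective_neg_one_zero_one (by norm_num) _).2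
    fun x ⟨hx₁, hx₂⟩ j => ?_
  fin_cases j <;> simp [lag_neg_one_zero_one] <;>
    nlinarith [sq_nonneg (x - 1 / 2), sq_nonneg (x + 1 / 2)]

lemma isLeast_absCoef_inscribed_triangles :
    IsLeast {t : ℝ | ∃ v : Fin 3 → (Fin 2 → ℝ), (∀ j, v j ∈ parabola '' Icc (-1) 1) ∧
        AffineIndependent ℝ v ∧ t = absCoef (parabola '' Icc (-1) 1) v} (11 / 8) := by
  refine ⟨⟨_, fun j => mem_image_of_mem _ (neg_one_zero_one_mem_Icc j),
    affineIndependent_parabola_comp injective_neg_one_zero_one,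
    absCoef_neg_one_zero_one.symm⟩, ?_⟩
  rintro _ ⟨v, hv, hAI, rfl⟩
  choose c hcI hcv using hv
  obtain rfl : parabola ∘ c = v := funext hcv
  exact eleven_eighths_le_absCoef (hAI.injective.of_comp) hcI

theorem quadratic_theta_xi_equality
    (θ ξ : ℝ)
    (hθ : θ = sInf {p : ℝ | ∃ a b c : ℝ, a ∈ Set.Icc (-1:ℝ) 1 ∧ b ∈ Set.Icc (-1:ℝ) 1 ∧
        c ∈ Set.Icc (-1:ℝ) 1 ∧ a < b ∧ b < c ∧ p = projNorm ![a, b, c]})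
    (hξ : ξ = sInf {t : ℝ | ∃ v : Fin 3 → (Fin 2 → ℝ),
        (∀ j, v j ∈ (fun x : ℝ => ![x, x^2]) '' Set.Icc (-1) 1) ∧ AffineIndependent ℝ v ∧
        t = absCoef ((fun x : ℝ => ![x, x^2]) '' Set.Icc (-1) 1) v}) :
    θ = 5/4 ∧ ξ = 11/8 ∧ ξ = (3/2) * (θ - 1) + 1 := by
  have hθ' : θ = 5 / 4 := hθ.trans isLeast_projNorm_three_nodes.csInf_eq
  have hξ' : ξ = 11 / 8 := hξ.trans isLeast_absCoef_inscribed_triangles.csInf_eq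
  refine ⟨hθ', hξ', ?_⟩
  rw [hθ', hξ']
  norm_num
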